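/- Let V be a commutative ring and I an idempotent ideal with Ĩ = I ⊗_V I flat, and A a commutative V-algebra. Then the canonical V-algebra map A_{!!} → A is an almost isomorphism: its kernel and cokernel are killed by I. -/

import Mathlib

/-!
Since `I = I²`, it suffices that every product `b * c` with `b, c ∈ I` kills the kernel and the
cokernel. On the cokernel, `(b * c) • x` is the image of `(b ⊗ c) ⊗ x`. On the kernel, if `(v, t)`
maps to `0` then `t` acts as `-v`, and `(b * c) • t = (b ⊗ c) ⊗ (action of t)`, so
`(b * c) • (v, t)` is the relation coming from `v • (b ⊗ c)`.
-/

open TensorProduct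

noncomputable section

set_option maxSynthPendingDepth 5

variable {V : Type} [CommRing V]

/-- The multiplication map `Ĩ = I ⊗[V] I → V` induced by the inclusion. -/
def idealMul (I : Ideal V) : (↥I ⊗[V] ↥I) →ₗ[V] V :=
  TensorProduct.lift (((LinearMap.mul V V).comp I.subtype).compl₂ I.subtype)

variable (I : Ideal V) (A : Type) [CommRing A] [Algebra V A]

/-- The map `Ĩ → Ĩ ⊗ A`, `x ↦ x ⊗ 1`, induced by the unit of `A`. -/
def unitTensor : (↥I ⊗[V] ↥I) →ₗ[V] ((↥I ⊗[V] ↥I) ⊗[V] A) :=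
  (TensorProduct.mk V (↥I ⊗[V] ↥I) A).flip 1

/-- The structure map of the pushout `V ⊕_Ĩ (Ĩ ⊗ A)`. -/
def bangRel : (↥I ⊗[V] ↥I) →ₗ[V] (V × ((↥I ⊗[V] ↥I) ⊗[V] A)) :=
  (idealMul I).prod (-(unitTensor I A))

/-- `A_{!!} = V ⊕_Ĩ (Ĩ ⊗ A)`, the pushout of `V ← Ĩ → Ĩ ⊗ A` in `V`-modules. -/
def Bang : Type :=
  (V × ((↥I ⊗[V] ↥I) ⊗[V] A)) ⧸ LinearMap.range (bangRel I A)

instance : AddCommGroup (Bang I A) := by unfold Bang; infer_instance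
instance : Module V (Bang I A) := by unfold Bang; infer_instance

/-- The action map `Ĩ ⊗ A → A`. -/
def tildeAct : ((↥I ⊗[V] ↥I) ⊗[V] A) →ₗ[V] A :=
  TensorProduct.lift ((LinearMap.lsmul V A).comp (idealMul I))

/-- The canonical map `A_{!!} → A`. -/
def bangToA : Bang I A →ₗ[V] A :=
  Submodule.liftQ _ ((Algebra.linearMap V A).coprod (tildeAct I A)) (by
    rintro y ⟨x, rfl⟩
    simp only [LinearMap.mem_ker, bangRel, unitTensor, LinearMap.prod_apply,
      LinearMap.coprod_apply, Function.prod, LinearMap.neg_apply, map_neg,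
      LinearMap.flip_apply, TensorProduct.mk_apply, tildeAct,
      TensorProduct.lift.tmul, LinearMap.coe_comp, Function.comp_apply,
      LinearMap.lsmul_apply, Algebra.linearMap_apply,
      Algebra.algebraMap_eq_smul_one, smul_eq_mul, mul_one]
    ring)

lemma Submodule.smul_mem_of_mul_self_eq {R M : Type*} [CommRing R] [AddCommGroup M]
    [Module R M] {I : Ideal R} (hI : I * I = I) {N : Submodule R M} {x : M}
    (h : ∀ b ∈ I, ∀ c ∈ I, (b * c) • x ∈ N) : ∀ a ∈ I, a • x ∈ N := by
  intro a ha
  rw [← hI] at ha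
  refine Submodule.mul_induction_on ha h fun u v hu hv => ?_
  rw [add_smul]
  exact N.add_mem hu hv

@[simp]
lemma idealMul_tmul (p q : ↥I) : idealMul I (p ⊗ₜ[V] q) = p * q := rfl

@[simp]
lemma tildeAct_tmul (s : ↥I ⊗[V] ↥I) (x : A) : tildeAct I A (s ⊗ₜ[V] x) = idealMul I s • x :=
  rfl

lemma mul_smul_eq_idealMul_smul_tmul (b c : ↥I) (s : ↥I ⊗[V] ↥I) :
    ((b : V) * c) • s = idealMul I s • (b ⊗ₜ[V] c) := by
  induction s using TensorProduct.induction_on with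
  | zero => simp
  | tmul p q =>
    rw [idealMul_tmul, ← smul_tmul_smul, ← smul_tmul_smul]
    congr 1 <;> exact Subtype.ext (mul_comm _ _)
  | add s t hs ht => rw [smul_add, map_add, add_smul, hs, ht]

lemma mul_smul_eq_tmul_tildeAct (b c : ↥I) (t : (↥I ⊗[V] ↥I) ⊗[V] A) :
    ((b : V) * c) • t = (b ⊗ₜ[V] c) ⊗ₜ[V] tildeAct I A t := by
  induction t using TensorProduct.induction_on with
  | zero => simp
  | tmul s x => rw [smul_tmul', mul_smul_eq_idealMul_smul_tmul, tildeAct_tmul, smul_tmul]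
  | add t u ht hu => rw [smul_add, map_add, tmul_add, ht, hu]

lemma tildeAct_tmul_tmul (b c : ↥I) (x : A) :
    tildeAct I A ((b ⊗ₜ[V] c) ⊗ₜ[V] x) = ((b : V) * c) • x := rfl

def Bang.mk : (V × ((↥I ⊗[V] ↥I) ⊗[V] A)) →ₗ[V] Bang I A :=
  Submodule.mkQ _

lemma Bang.mk_surjective : Function.Surjective (Bang.mk I A) :=
  Submodule.mkQ_surjective _

lemma Bang.mk_eq_zero_iff (p : V × ((↥I ⊗[V] ↥I) ⊗[V] A)) :
    Bang.mk I A p = 0 ↔ p ∈ LinearMap.range (bangRel I A) :=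
  Submodule.Quotient.mk_eq_zero _

lemma bangRel_apply (s : ↥I ⊗[V] ↥I) :
    bangRel I A s = (idealMul I s, -(s ⊗ₜ[V] (1 : A))) := rfl

lemma bangToA_mk (p : V × ((↥I ⊗[V] ↥I) ⊗[V] A)) :
    bangToA I A (Bang.mk I A p) = algebraMap V A p.1 + tildeAct I A p.2 := rfl

lemma mul_smul_mem_range_bangRel {p : V × ((↥I ⊗[V] ↥I) ⊗[V] A)}
    (hp : bangToA I A (Bang.mk I A p) = 0) (b c : ↥I) :
    ((b : V) * c) • p ∈ LinearMap.range (bangRel I A) := by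
  have hact : tildeAct I A p.2 = -algebraMap V A p.1 :=
    eq_neg_of_add_eq_zero_right ((bangToA_mk I A p).symm.trans hp)
  refine ⟨p.1 • (b ⊗ₜ[V] c), Prod.ext ?_ ?_⟩
  · simp only [map_smul, bangRel_apply, Prod.smul_fst, idealMul_tmul, smul_eq_mul]
    ring
  · simp only [map_smul, bangRel_apply, Prod.smul_snd]
    rw [mul_smul_eq_tmul_tildeAct, hact, smul_neg, ← tmul_smul, tmul_neg,
      Algebra.algebraMap_eq_smul_one]

theorem bang_to_A_almost_iso (hI : I * I = I) :
    (∀ a ∈ I, ∀ x ∈ LinearMap.ker (bangToA I A), a • x = 0) ∧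
    (∀ a ∈ I, ∀ y : A ⧸ LinearMap.range (bangToA I A), a • y = 0) := by
  constructor
  · intro a ha x hx
    obtain ⟨p, rfl⟩ := Bang.mk_surjective I A x
    rw [← map_smul, Bang.mk_eq_zero_iff]
    exact Submodule.smul_mem_of_mul_self_eq hI
      (fun b hb c hc => mul_smul_mem_range_bangRel I A hx ⟨b, hb⟩ ⟨c, hc⟩) a ha
  · intro a ha y
    obtain ⟨x, rfl⟩ := Submodule.Quotient.mk_surjective _ y
    rw [← Submodule.Quotient.mk_smul, Submodule.Quotient.mk_eq_zero]
    refine Submodule.smul_mem_of_mul_self_eq hI (fun b hb c hc => ?_) a ha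
    refine ⟨Bang.mk I A (0, ((⟨b, hb⟩ : ↥I) ⊗ₜ[V] (⟨c, hc⟩ : ↥I)) ⊗ₜ[V] x), ?_⟩
    rw [bangToA_mk, map_zero, zero_add, tildeAct_tmul_tmul]

end
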